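/- Let C_n be an n-particle configuration with net charge Q(C_n) ≥ 0. Then E(C_n) ≥ −2n + 2·Q(C_n). Conversely, if every atom with charge −1 has exactly four neighbors, all bonds have unit length, and the configuration is repulsion-free (|x_i − x_j| ≥ √2 whenever i ≠ j and q_i = q_j), then E(C_n) = −2n + 2·Q(C_n). -/

import Mathlib

/-!
Let `m` be the number of negative atoms, so that `-2n + 2Q = -4m`. If two atoms are closer
than `1` the energy is `+∞`. Otherwise let `N(i)` be the positive atoms within `r₀` of a
negative atom `i`; every attractive bond is one of these, so the attraction is at least
`-Σ |N(i)|`. The atoms of `N(i)` lie in the annulus `1 ≤ |x - xᵢ| ≤ r₀`. Listed by angle, at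
most four of their cyclic gaps exceed `2π/5`, so at least `|N(i)| - 4` consecutive pairs are
closer than `2 r₀ sin (π/5)`, and each such pair repels by more than `6`. A given positive pair
is counted in this way by at most six negative atoms, because `2 r₀ sin (π/7) < 1` leaves room
for at most six `1`-separated points in an annulus. Hence the repulsion is at least
`Σ (|N(i)| - 4)` and the energy at least `-4m`. Under the hypotheses of the converse there is
no repulsion and every negative atom has exactly four unit bonds, all to positive atoms, so
the energy is exactly `-4m`.
-/

open scoped BigOperators
open Real

noncomputable section

/-- Points of the plane. -/
abbrev Pt := EuclideanSpace ℝ (Fin 2)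

/-- An `n`-particle configuration: positions in the plane together with charges in `{-1, 1}`. -/
structure Config (n : ℕ) where
  x : Fin n → Pt
  q : Fin n → ℤ
  hq : ∀ i, q i = 1 ∨ q i = -1

/-- The configurational energy
`E(C) = (1/2) Σ_{i≠j, q_i=q_j} V_r(|x_i-x_j|) + (1/2) Σ_{i≠j, q_i≠q_j} V_a(|x_i-x_j|)`. -/
def energy (Va Vr : ℝ → EReal) {n : ℕ} (C : Config n) : EReal :=
  ((1/2 : ℝ) : EReal) * (∑ i : Fin n, ∑ j : Fin n,
      if i ≠ j ∧ C.q i = C.q j then Vr (dist (C.x i) (C.x j)) else 0)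
  + ((1/2 : ℝ) : EReal) * (∑ i : Fin n, ∑ j : Fin n,
      if i ≠ j ∧ C.q i ≠ C.q j then Va (dist (C.x i) (C.x j)) else 0)

/-- Slope of (the real part of) `V` between `a` and `r`. -/
def slope' (V : ℝ → EReal) (a r : ℝ) : ℝ := ((V r).toReal - (V a).toReal) / (r - a)

/-- Assumptions [i]-[viii] on the attractive-repulsive potential `Va` and the repulsive
potential `Vr`, with reference parameter `r₀ ∈ [1, (2 sin(π/7))⁻¹)`.  The left derivative of
`Vr` at `√2` is encoded as the supremum of slopes from the left, and the right derivative
of `Vr` at `1` as the infimum of slopes from the right (`Vr` is convex and real-valued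
on `[1,∞)`, so these coincide with the one-sided derivatives). -/
structure PotentialAssumptions (r₀ : ℝ) (Va Vr : ℝ → EReal) : Prop where
  r₀_lb : 1 ≤ r₀
  r₀_ub : r₀ < (2 * Real.sin (Real.pi / 7))⁻¹
  va_inf : ∀ r : ℝ, r < 1 → Va r = ⊤
  va_one : Va 1 = ((-1 : ℝ) : EReal)
  va_gt : ∀ r : ℝ, r ≠ 1 → ((-1 : ℝ) : EReal) < Va r
  va_nonpos : ∀ r : ℝ, 1 ≤ r → Va r ≤ 0
  va_zero : ∀ r : ℝ, r₀ < r → Va r = 0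
  vr_inf : ∀ r : ℝ, r < 1 → Vr r = ⊤
  vr_nonneg : ∀ r : ℝ, 1 ≤ r → 0 ≤ Vr r
  vr_fin : ∀ r : ℝ, 1 ≤ r → Vr r < ⊤
  vr_antitone : ∀ r s : ℝ, 1 ≤ r → r ≤ s → Vr s ≤ Vr r
  vr_convex : ConvexOn ℝ (Set.Ici (1 : ℝ)) (fun r => (Vr r).toReal)
  vr_quant : ((6 : ℝ) : EReal) < Vr (2 * r₀ * Real.sin (Real.pi / 5))
  vr_zero_iff : ∀ r : ℝ, Vr r = 0 ↔ Real.sqrt 2 ≤ r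
  slope_left : sSup (slope' Vr (Real.sqrt 2) '' Set.Ico 1 (Real.sqrt 2))
      < -16 / (Real.sqrt 2 * Real.pi)
  slope_right : ∀ r : ℝ, 1 < r → r ≤ r₀ →
      -(1/2) * sInf (slope' Vr 1 '' Set.Ioi (1 : ℝ)) < slope' Va 1 r

/-- The net charge `Q(C) = Σ_i q_i`. -/
def netCharge {n : ℕ} (C : Config n) : ℤ := ∑ i : Fin n, C.q i

/-- The bond graph: atoms are bonded iff `0 < |x_i - x_j| ≤ r₀`. -/
def bondGraph (r₀ : ℝ) {n : ℕ} (C : Config n) : SimpleGraph (Fin n) where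
  Adj i j := C.x i ≠ C.x j ∧ dist (C.x i) (C.x j) ≤ r₀
  symm := ⟨fun i j h => ⟨h.1.symm, by rw [dist_comm]; exact h.2⟩⟩
  loopless := ⟨fun i h => h.1 rfl⟩

/-- The number of bonds. -/
def numBonds (r₀ : ℝ) {n : ℕ} (C : Config n) : ℕ := (bondGraph r₀ C).edgeSet.ncard

/-- A ground state minimizes the energy among all `n`-particle configurations. -/
def IsGroundState (Va Vr : ℝ → EReal) {n : ℕ} (C : Config n) : Prop :=
  ∀ C' : Config n, energy Va Vr C ≤ energy Va Vr C'

/-- Alternating charge distribution: bonded atoms have opposite charges. -/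
def AlternatingCharges (r₀ : ℝ) {n : ℕ} (C : Config n) : Prop :=
  ∀ i j : Fin n, (bondGraph r₀ C).Adj i j → C.q i ≠ C.q j

/-- A bond is acyclic if it lies on no simple cycle of the graph. -/
def IsAcyclicBond {n : ℕ} (G : SimpleGraph (Fin n)) (e : Sym2 (Fin n)) : Prop :=
  e ∈ G.edgeSet ∧ ∀ (u : Fin n) (c : G.Walk u u), c.IsCycle → e ∉ c.edges

/-- `v` lies on a simple cycle of `G` whose edge set is `S`. -/
def LiesOnCycleWithEdges {n : ℕ} (G : SimpleGraph (Fin n)) (v : Fin n)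
    (S : Set (Sym2 (Fin n))) : Prop :=
  ∃ (u : Fin n) (c : G.Walk u u), c.IsCycle ∧ v ∈ c.support ∧ S = {e | e ∈ c.edges}

/-- A bridge: an acyclic bond contained in a simple path connecting two vertices lying
in two distinct cycles. -/
def IsBridgeBond {n : ℕ} (G : SimpleGraph (Fin n)) (e : Sym2 (Fin n)) : Prop :=
  IsAcyclicBond G e ∧ ∃ (u v : Fin n) (p : G.Walk u v) (S₁ S₂ : Set (Sym2 (Fin n))),
    p.IsPath ∧ e ∈ p.edges ∧ LiesOnCycleWithEdges G u S₁ ∧ LiesOnCycleWithEdges G v S₂ ∧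
    S₁ ≠ S₂

/-- A flag: an acyclic bond which is not a bridge. -/
def IsFlagBond {n : ℕ} (G : SimpleGraph (Fin n)) (e : Sym2 (Fin n)) : Prop :=
  IsAcyclicBond G e ∧ ¬ IsBridgeBond G e

/-- The square lattice `ℤ² ⊂ ℝ²`. -/
def squareLattice : Set Pt := {p | (∃ a : ℤ, p 0 = (a : ℝ)) ∧ (∃ b : ℤ, p 1 = (b : ℝ))}

/-- The set of attainable net charges `Q_net(n) = (2ℤ + n mod 2) ∩ [-n, n]`. -/
def Qnet (n : ℕ) : Set ℤ := {q | |q| ≤ (n : ℤ) ∧ q % 2 = (n : ℤ) % 2}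

/-- The minimal energy among `n`-particle configurations with net charge `qnet`. -/
def Emin (Va Vr : ℝ → EReal) (n : ℕ) (qnet : ℤ) : EReal :=
  sInf ((fun C : Config n => energy Va Vr C) '' {C : Config n | netCharge C = qnet})

/-- The saturation net charge
`q_sat^n = min {q ∈ Q_net(n) ∩ [0,n] : E^n_min(q) = -2n + 2q}`. -/
def qsat (Va Vr : ℝ → EReal) (n : ℕ) : ℤ :=
  sInf {qnet : ℤ | qnet ∈ Qnet n ∧ 0 ≤ qnet ∧
    Emin Va Vr n qnet = (((-2) * (n : ℝ) + 2 * (qnet : ℝ) : ℝ) : EReal)}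

/-- A configuration is optimal (for its own net charge) if it attains `E^n_min(Q(C))`. -/
def IsOptimal (Va Vr : ℝ → EReal) {n : ℕ} (C : Config n) : Prop :=
  energy Va Vr C = Emin Va Vr n (netCharge C)

/-- The function `φ` characterizing the saturation net charge. -/
def phi (n : ℕ) : ℤ :=
  if n = 0 then 0
  else if n = 1 then 1
  else if n % 2 = 1 then 2 * ⌊(-1/2 : ℝ) + (1/2) * Real.sqrt (2 * (n : ℝ) - 5)⌋ + 3
  else 2 * ⌊(1/2 : ℝ) * Real.sqrt (2 * (n : ℝ) - 4)⌋ + 2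

/-- The neighborhood `N(x_i) = (X_n \ {x_i}) ∩ {|x - x_i| ≤ r₀}`. -/
def nbhd (r₀ : ℝ) {n : ℕ} (C : Config n) (i : Fin n) : Set Pt :=
  {y | (∃ j : Fin n, C.x j = y) ∧ y ≠ C.x i ∧ dist y (C.x i) ≤ r₀}

/-- The square `S_n = {x ∈ ℤ² : x₁,x₂ ≥ 0, |x|_∞ ≤ ⌊√n - 1⌋}`. -/
def Sn (n : ℕ) : Set Pt :=
  {p | ∃ a b : ℤ, p 0 = (a : ℝ) ∧ p 1 = (b : ℝ) ∧ 0 ≤ a ∧ 0 ≤ b ∧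
    max a b ≤ ⌊Real.sqrt (n : ℝ) - 1⌋}

/-- The diamond `D_n = {x ∈ ℤ² : |x|₁ ≤ ⌊(-1 + √(2n-1))/2⌋}`. -/
def Dn (n : ℕ) : Set Pt :=
  {p | ∃ a b : ℤ, p 0 = (a : ℝ) ∧ p 1 = (b : ℝ) ∧
    |a| + |b| ≤ ⌊((-1) + Real.sqrt (2 * (n : ℝ) - 1)) / 2⌋}

/-- The square `S_{k²} = {x ∈ ℤ² : x₁,x₂ ≥ 0, |x|_∞ ≤ k - 1}` with `k²` lattice points. -/
def SqK (k : ℕ) : Set Pt :=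
  {p | ∃ a b : ℤ, p 0 = (a : ℝ) ∧ p 1 = (b : ℝ) ∧ 0 ≤ a ∧ 0 ≤ b ∧
    max a b ≤ (k : ℤ) - 1}

/-- `β(n) = 2n - 2√n`. -/
def beta (n : ℕ) : ℝ := 2 * (n : ℝ) - 2 * Real.sqrt (n : ℝ)

end

open Finset EuclideanGeometry

lemma Fin.add_one_ne_self {k : ℕ} (hk : 1 ≤ k) (j : Fin (k + 1)) : j + 1 ≠ j := by
  rw [Ne, Fin.ext_iff, Fin.val_add_one]
  split_ifs with h
  · rw [h, Fin.val_last]; omega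
  · omega

lemma Fin.add_one_add_one_ne_self {k : ℕ} (hk : 2 ≤ k) (j : Fin (k + 1)) : j + 1 + 1 ≠ j := by
  have hv : ∀ i : Fin (k + 1), (i + 1 : Fin (k + 1)).val = if i.val = k then 0 else i.val + 1 := by
    intro i; rw [Fin.val_add_one]; simp only [Fin.ext_iff, Fin.val_last]
  rw [Ne, Fin.ext_iff, hv, hv]
  have := j.isLt
  split_ifs <;> omega

lemma Finset.exists_monotone_enumeration {ι α : Type*} [LinearOrder α] (s : Finset ι) {k : ℕ}
    (hs : #s = k) (f : ι → α) :
    ∃ p : Fin k → ι, Function.Injective p ∧ (∀ j, p j ∈ s) ∧ Monotone (f ∘ p) := by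
  let e : Fin k ≃ s := (Fintype.equivFinOfCardEq (by simpa using hs)).symm
  let σ := Tuple.sort fun j => f (e j)
  refine ⟨fun j => e (σ j), fun a b hab => ?_, fun j => (e (σ j)).2,
    Tuple.monotone_sort fun j => f (e j)⟩
  exact σ.injective (e.injective (Subtype.ext hab))

lemma card_mul_lt_sum {ι : Type*} [Fintype ι] {g : ι → ℝ} (hg : ∀ j, 0 ≤ g j) {t : Finset ι}
    (ht : t.Nonempty) {α : ℝ} (hα : ∀ j ∈ t, α < g j) : #t * α < ∑ j, g j :=
  calc #t * α = ∑ _j ∈ t, α := by rw [sum_const, nsmul_eq_mul]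
    _ < ∑ j ∈ t, g j := sum_lt_sum_of_nonempty ht hα
    _ ≤ ∑ j, g j := sum_le_sum_of_subset_of_nonneg (subset_univ t) fun j _ _ => hg j

lemma two_mul_card_le_of_consecutive_pairs_mem {ι : Type*} {k : ℕ} (hk : 2 ≤ k)
    {p : Fin (k + 1) → ι} (hp : Function.Injective p) (t : Finset (Fin (k + 1)))
    (u : Finset (ι × ι)) (hu : ∀ j ∈ t, (p j, p (j + 1)) ∈ u ∧ (p (j + 1), p j) ∈ u) :
    2 * #t ≤ #u := by
  classical
  let fwd : Fin (k + 1) → ι × ι := fun j => (p j, p (j + 1))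
  have hdisj : Disjoint (t.image fwd) (t.image (Prod.swap ∘ fwd)) := by
    refine disjoint_left.2 fun q hq hq' => ?_
    obtain ⟨j, -, rfl⟩ := mem_image.1 hq
    obtain ⟨j', -, hj'⟩ := mem_image.1 hq'
    have h₁ : j' + 1 = j := hp (congrArg Prod.fst hj')
    have h₂ : j' = j + 1 := hp (congrArg Prod.snd hj')
    exact Fin.add_one_add_one_ne_self hk j (h₂ ▸ h₁)
  calc 2 * #t = #(t.image fwd) + #(t.image (Prod.swap ∘ fwd)) := by
        rw [card_image_of_injective _ fun a b h => hp (congrArg Prod.fst h),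
          card_image_of_injective _ fun a b h => hp (congrArg Prod.snd h), two_mul]
    _ = #(t.image fwd ∪ t.image (Prod.swap ∘ fwd)) := (card_union_of_disjoint hdisj).symm
    _ ≤ #u := card_le_card <| union_subset
        (fun q hq => by obtain ⟨j, hj, rfl⟩ := mem_image.1 hq; exact (hu j hj).1)
        (fun q hq => by obtain ⟨j, hj, rfl⟩ := mem_image.1 hq; exact (hu j hj).2)

lemma le_of_cos_eq_cos {x y : ℝ} (hx₀ : 0 ≤ x) (hxπ : x ≤ π) (hy : 0 ≤ y) (h : cos x = cos y) :
    x ≤ y := by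
  rcases le_or_gt y π with hyπ | hyπ
  · rw [← arccos_cos hx₀ hxπ, h, arccos_cos hy hyπ]
  · exact hxπ.trans hyπ.le

lemma two_fifths_lt_sin_pi_div_seven : 2 / 5 < sin (π / 7) := by
  have h3 := pi_gt_three
  have h315 := pi_lt_d2
  have := sin_gt_sub_cube (x := π / 7) (by positivity)
  nlinarith [pow_le_pow_left₀ (by positivity : (0 : ℝ) ≤ π / 7) (by linarith : π / 7 ≤ 0.45) 3]

lemma two_mul_cos_le_of_two_mul_sin_lt_one {r θ : ℝ} (hr : 1 ≤ r) (hr7 : 2 * r * sin (π / 7) < 1)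
    (hθ : 2 * π / 7 ≤ θ) (hθπ : θ ≤ π) : 2 * r * cos θ ≤ 1 + r := by
  have hs := two_fifths_lt_sin_pi_div_seven
  have hcos : cos θ ≤ cos (2 * π / 7) :=
    cos_le_cos_of_nonneg_of_le_pi (by positivity) hθπ hθ
  have hcos2 : cos (2 * π / 7) = 1 - 2 * sin (π / 7) ^ 2 := by
    rw [show 2 * π / 7 = 2 * (π / 7) by ring, cos_two_mul]
    linear_combination 2 * sin_sq_add_cos_sq (π / 7)
  nlinarith

lemma sq_add_sq_sub_two_mul_mul_le {a b r c : ℝ} (ha : a ∈ Set.Icc 1 r) (hb : b ∈ Set.Icc 1 r)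
    (hrc : 2 * r * c ≤ 1 + r) : a ^ 2 + b ^ 2 - 2 * a * b * c ≤ 2 * r ^ 2 * (1 - c) := by
  obtain ⟨ha1, har⟩ := ha
  obtain ⟨hb1, hbr⟩ := hb
  have hc : c ≤ 1 := by nlinarith
  nlinarith [mul_nonneg (sub_nonneg.2 har) (sub_nonneg.2 ha1),
    mul_nonneg (sub_nonneg.2 hbr) (sub_nonneg.2 hb1),
    mul_nonneg (sub_nonneg.2 har) (sub_nonneg.2 hbr),
    mul_nonneg (sub_nonneg.2 hc) (sq_nonneg (a - b)),
    mul_nonneg (sub_nonneg.2 hrc) (add_nonneg (sub_nonneg.2 har) (sub_nonneg.2 hbr))]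

lemma dist_le_of_angle_le {V P : Type*} [NormedAddCommGroup V] [InnerProductSpace ℝ V]
    [MetricSpace P] [NormedAddTorsor V P] {a b c : P} {r θ : ℝ}
    (ha : dist a c ∈ Set.Icc 1 r) (hb : dist b c ∈ Set.Icc 1 r) (hθ : θ ≤ π)
    (hangle : ∠ a c b ≤ θ) (hrθ : 2 * r * cos θ ≤ 1 + r) :
    dist a b ≤ 2 * r * sin (θ / 2) := by
  have hθ0 : 0 ≤ θ := (angle_nonneg a c b).trans hangle
  have hcos : cos θ ≤ cos (∠ a c b) := cos_le_cos_of_nonneg_of_le_pi (angle_nonneg a c b) hθ hangle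
  have hsin : 0 ≤ sin (θ / 2) := sin_nonneg_of_nonneg_of_le_pi (by linarith) (by linarith)
  have hr : 0 ≤ r := by linarith [ha.1, ha.2]
  refine (sq_le_sq₀ dist_nonneg (by positivity)).1 ?_
  calc dist a b ^ 2
      = dist a c ^ 2 + dist b c ^ 2 - 2 * dist a c * dist b c * cos (∠ a c b) := by
        rw [sq, law_cos a c b]; ring
    _ ≤ dist a c ^ 2 + dist b c ^ 2 - 2 * dist a c * dist b c * cos θ := by
        have : 0 ≤ dist a c * dist b c := by positivity
        nlinarith
    _ ≤ 2 * r ^ 2 * (1 - cos θ) := sq_add_sq_sub_two_mul_mul_le ha hb hrθ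
    _ = (2 * r * sin (θ / 2)) ^ 2 := by
        rw [mul_pow, sin_sq_eq_half_sub, show 2 * (θ / 2) = θ by ring]; ring

lemma Complex.cos_angle_eq_cos_arg_sub {z w : ℂ} (hz : z ≠ 0) (hw : w ≠ 0) :
    Real.cos (InnerProductGeometry.angle z w) = Real.cos (z.arg - w.arg) := by
  rw [angle_eq_abs_arg hz hw, Real.cos_abs, ← Real.Angle.cos_coe, arg_div_coe_angle hz hw,
    ← Real.Angle.coe_sub, Real.Angle.cos_coe]

/-- The gaps between consecutive angles `W 0 ≤ … ≤ W k` around the circle. -/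
noncomputable def cyclicGap {k : ℕ} (W : Fin (k + 1) → ℝ) (j : Fin (k + 1)) : ℝ :=
  W (j + 1) - W j + if j = Fin.last k then 2 * π else 0

lemma sum_cyclicGap {k : ℕ} (W : Fin (k + 1) → ℝ) : ∑ j, cyclicGap W j = 2 * π := by
  simp only [cyclicGap, sum_add_distrib, sum_sub_distrib, sum_ite_eq', mem_univ, if_true]
  rw [show ∑ j, W (j + 1) = ∑ j, W j from Equiv.sum_comp (Equiv.addRight 1) W, sub_self, zero_add]

lemma cyclicGap_nonneg {k : ℕ} {W : Fin (k + 1) → ℝ} (hW : Monotone W)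
    (hlast : W (Fin.last k) ≤ W 0 + 2 * π) (j : Fin (k + 1)) : 0 ≤ cyclicGap W j := by
  unfold cyclicGap
  split_ifs with hj
  · subst hj; simp only [Fin.last_add_one]; linarith
  · linarith [hW (Fin.le_of_lt (Fin.lt_add_one_iff.2 (Fin.lt_last_iff_ne_last.2 hj)))]

lemma cos_cyclicGap {k : ℕ} (W : Fin (k + 1) → ℝ) (j : Fin (k + 1)) :
    cos (cyclicGap W j) = cos (W (j + 1) - W j) := by
  unfold cyclicGap
  split_ifs <;> simp [cos_add_two_pi]

lemma exists_cyclic_order {ι : Type*} (s : Finset ι) {k : ℕ} (hs : #s = k + 1) (x : ι → Pt)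
    (c : Pt) (hx : ∀ i ∈ s, x i ≠ c) :
    ∃ (p : Fin (k + 1) → ι) (g : Fin (k + 1) → ℝ), Function.Injective p ∧ (∀ j, p j ∈ s) ∧
      (∀ j, 0 ≤ g j) ∧ ∑ j, g j = 2 * π ∧ ∀ j, ∠ (x (p j)) c (x (p (j + 1))) ≤ g j := by
  -- angles are measured through `arg` after identifying the plane with `ℂ`
  let z : ι → ℂ := fun i => Complex.orthonormalBasisOneI.repr.symm (x i - c)
  have hz : ∀ i ∈ s, z i ≠ 0 := fun i hi =>
    (map_ne_zero_iff _ Complex.orthonormalBasisOneI.repr.symm.injective).2 (sub_ne_zero.2 (hx i hi))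
  obtain ⟨p, hpinj, hps, hmono⟩ := s.exists_monotone_enumeration hs fun i => (z i).arg
  have hgap := cyclicGap_nonneg hmono (by
    simp only [Function.comp_apply]
    linarith [(Complex.arg_mem_Ioc (z (p (Fin.last k)))).2, (Complex.arg_mem_Ioc (z (p 0))).1])
  refine ⟨p, cyclicGap _, hpinj, hps, hgap, sum_cyclicGap _, fun j => ?_⟩
  have hangle :
      ∠ (x (p j)) c (x (p (j + 1))) = InnerProductGeometry.angle (z (p j)) (z (p (j + 1))) :=
    (Complex.orthonormalBasisOneI.repr.symm.toLinearIsometry.angle_map _ _).symm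
  rw [hangle]
  refine le_of_cos_eq_cos (InnerProductGeometry.angle_nonneg _ _)
    (InnerProductGeometry.angle_le_pi _ _) (hgap j) ?_
  rw [Complex.cos_angle_eq_cos_arg_sub (hz _ (hps j)) (hz _ (hps _)), cos_cyclicGap, ← cos_neg,
    neg_sub]
  rfl

section Annulus

variable {ι : Type*} {r : ℝ} {s : Finset ι} {x : ι → Pt} {c : Pt}

lemma card_le_six_of_mem_annulus (hr : 1 ≤ r) (hr7 : 2 * r * sin (π / 7) < 1)
    (hx : ∀ i ∈ s, dist (x i) c ∈ Set.Icc 1 r)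
    (hsep : ∀ i ∈ s, ∀ j ∈ s, i ≠ j → 1 ≤ dist (x i) (x j)) : #s ≤ 6 := by
  by_contra! h7
  obtain ⟨k, hk⟩ : ∃ k, #s = k + 1 := ⟨#s - 1, by omega⟩
  have hxc : ∀ i ∈ s, x i ≠ c := fun i hi => dist_pos.1 (one_pos.trans_le (hx i hi).1)
  obtain ⟨p, g, hpinj, hps, hg0, hgsum, hangle⟩ := exists_cyclic_order s hk x c hxc
  have hgap : ∀ j ∈ univ, 2 * π / 7 < g j := by
    intro j _
    by_contra! hj
    have hchord := dist_le_of_angle_le (hx _ (hps j)) (hx _ (hps (j + 1)))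
      (by linarith [pi_pos]) ((hangle j).trans hj)
      (two_mul_cos_le_of_two_mul_sin_lt_one hr hr7 le_rfl (by linarith [pi_pos]))
    have hne : p j ≠ p (j + 1) := hpinj.ne (Fin.add_one_ne_self (by omega) j).symm
    rw [show 2 * π / 7 / 2 = π / 7 by ring] at hchord
    linarith [hsep _ (hps j) _ (hps (j + 1)) hne]
  have hlt := card_mul_lt_sum hg0 univ_nonempty hgap
  rw [hgsum, card_univ, Fintype.card_fin] at hlt
  have : (7 : ℝ) ≤ (k + 1 : ℕ) := by exact_mod_cast (by omega : 7 ≤ k + 1)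
  nlinarith [pi_pos]

lemma two_mul_card_sub_four_le_card_close_pairs [DecidableEq ι] (hr : 1 ≤ r)
    (hr7 : 2 * r * sin (π / 7) < 1) (hx : ∀ i ∈ s, dist (x i) c ∈ Set.Icc 1 r) :
    2 * (#s - 4) ≤ #{q ∈ s ×ˢ s | q.1 ≠ q.2 ∧ dist (x q.1) (x q.2) ≤ 2 * r * sin (π / 5)} := by
  rcases le_or_gt #s 4 with h4 | h4
  · simp [Nat.sub_eq_zero_of_le h4]
  obtain ⟨k, hk⟩ : ∃ k, #s = k + 1 := ⟨#s - 1, by omega⟩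
  have hxc : ∀ i ∈ s, x i ≠ c := fun i hi => dist_pos.1 (one_pos.trans_le (hx i hi).1)
  obtain ⟨p, g, hpinj, hps, hg0, hgsum, hangle⟩ := exists_cyclic_order s hk x c hxc
  set good : Finset (Fin (k + 1)) := {j | g j ≤ 2 * π / 5}
  -- five gaps wider than `2π/5` would exceed the full turn
  have hbad : #goodᶜ ≤ 4 := by
    by_contra! h5
    have hlt := card_mul_lt_sum hg0 (card_pos.1 (by omega : 0 < #goodᶜ))
      (α := 2 * π / 5) fun j hj => by simpa [good] using hj
    have : (5 : ℝ) ≤ #goodᶜ := by exact_mod_cast h5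
    rw [hgsum] at hlt
    nlinarith [pi_pos]
  have hgood : #s - 4 ≤ #good := by
    have := card_add_card_compl good
    rw [Fintype.card_fin] at this
    omega
  refine (Nat.mul_le_mul_left 2 hgood).trans
    (two_mul_card_le_of_consecutive_pairs_mem (by omega) hpinj good _ fun j hj => ?_)
  have hgj : g j ≤ 2 * π / 5 := by simpa [good] using hj
  have hchord := dist_le_of_angle_le (hx _ (hps j)) (hx _ (hps (j + 1)))
    (by linarith [pi_pos]) ((hangle j).trans hgj)
    (two_mul_cos_le_of_two_mul_sin_lt_one hr hr7 (by linarith [pi_pos]) (by linarith [pi_pos]))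
  rw [show 2 * π / 5 / 2 = π / 5 by ring] at hchord
  have hne : p j ≠ p (j + 1) := hpinj.ne (Fin.add_one_ne_self (by omega) j).symm
  simp only [mem_filter, mem_product]
  exact ⟨⟨⟨hps _, hps _⟩, hne, hchord⟩, ⟨hps _, hps _⟩, hne.symm, by rwa [dist_comm]⟩

end Annulus

lemma EReal.coe_finset_sum {α : Type*} (s : Finset α) (f : α → ℝ) :
    ((∑ a ∈ s, f a : ℝ) : EReal) = ∑ a ∈ s, (f a : EReal) :=
  map_sum (⟨⟨(↑), EReal.coe_zero⟩, EReal.coe_add⟩ : ℝ →+ EReal) f s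

lemma EReal.sum_ne_bot {α : Type*} {s : Finset α} {f : α → EReal} (hf : ∀ a ∈ s, f a ≠ ⊥) :
    ∑ a ∈ s, f a ≠ ⊥ :=
  sum_induction f (· ≠ ⊥) (fun _ _ h₁ h₂ => EReal.add_ne_bot_iff.2 ⟨h₁, h₂⟩) (by simp) hf

lemma EReal.sum_eq_top_of_ne_bot {α : Type*} {s : Finset α} {f : α → EReal}
    (hf : ∀ a ∈ s, f a ≠ ⊥) {a : α} (ha : a ∈ s) (htop : f a = ⊤) : ∑ b ∈ s, f b = ⊤ := by
  classical
  rw [← add_sum_erase s f ha, htop]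
  exact EReal.top_add_of_ne_bot (EReal.sum_ne_bot fun b hb => hf b (mem_of_mem_erase hb))

lemma EReal.sum_sum_ne_bot {α β : Type*} [Fintype α] [Fintype β] {f : α → β → EReal}
    (hf : ∀ a b, f a b ≠ ⊥) : ∑ a, ∑ b, f a b ≠ ⊥ :=
  EReal.sum_ne_bot fun a _ => EReal.sum_ne_bot fun b _ => hf a b

lemma EReal.sum_sum_eq_top_of_ne_bot {α β : Type*} [Fintype α] [Fintype β] {f : α → β → EReal}
    (hf : ∀ a b, f a b ≠ ⊥) {a : α} {b : β} (htop : f a b = ⊤) : ∑ a, ∑ b, f a b = ⊤ :=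
  EReal.sum_eq_top_of_ne_bot (fun a _ => EReal.sum_ne_bot fun b _ => hf a b) (mem_univ a)
    (EReal.sum_eq_top_of_ne_bot (fun b _ => hf a b) (mem_univ b) htop)

lemma EReal.coe_mul_add_coe_mul_eq_top {c : ℝ} (hc : 0 < c) {x y : EReal} (hx : x ≠ ⊥)
    (hy : y ≠ ⊥) (htop : x = ⊤ ∨ y = ⊤) : (c : EReal) * x + (c : EReal) * y = ⊤ := by
  have hmul : ∀ {z : EReal}, z ≠ ⊥ → (c : EReal) * z ≠ ⊥ := fun hz =>
    (EReal.mul_ne_bot _ _).2 ⟨.inl (EReal.coe_ne_bot _), .inr hz, .inl (EReal.coe_ne_top _),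
      .inl (EReal.coe_nonneg.2 hc.le)⟩
  rcases htop with rfl | rfl
  · rw [EReal.coe_mul_top_of_pos hc, EReal.top_add_of_ne_bot (hmul hy)]
  · rw [EReal.coe_mul_top_of_pos hc, EReal.add_top_of_ne_bot (hmul hx)]

namespace PotentialAssumptions

variable {r₀ : ℝ} {Va Vr : ℝ → EReal} (h : PotentialAssumptions r₀ Va Vr)
include h

lemma two_mul_mul_sin_pi_div_seven_lt_one : 2 * r₀ * sin (π / 7) < 1 := by
  have hs : 0 < 2 * sin (π / 7) := by linarith [two_fifths_lt_sin_pi_div_seven]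
  have := h.r₀_ub
  rw [inv_eq_one_div, lt_div_iff₀ hs] at this
  linarith

lemma r₀_lt_sqrt_two : r₀ < √2 := by
  have h7 := h.two_mul_mul_sin_pi_div_seven_lt_one
  have hs := two_fifths_lt_sin_pi_div_seven
  have h2 : (1.25 : ℝ) < √2 := by
    rw [lt_sqrt (by norm_num)]; norm_num
  nlinarith [h.r₀_lb]

lemma neg_one_le_va (r : ℝ) : ((-1 : ℝ) : EReal) ≤ Va r := by
  rcases eq_or_ne r 1 with rfl | hr
  · rw [h.va_one]
  · exact (h.va_gt r hr).le

lemma zero_le_vr (r : ℝ) : 0 ≤ Vr r := by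
  rcases lt_or_ge r 1 with hr | hr
  · rw [h.vr_inf r hr]; exact le_top
  · exact h.vr_nonneg r hr

lemma six_lt_vr {r : ℝ} (hr : r ≤ 2 * r₀ * sin (π / 5)) : ((6 : ℝ) : EReal) < Vr r := by
  rcases lt_or_ge r 1 with hr1 | hr1
  · rw [h.vr_inf r hr1]; exact EReal.coe_lt_top 6
  · exact h.vr_quant.trans_le (h.vr_antitone r _ hr1 hr)

end PotentialAssumptions

namespace Config

variable {n : ℕ} (C : Config n) {r₀ : ℝ}

def negAtoms : Finset (Fin n) := {i | C.q i = -1}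

lemma netCharge_eq : netCharge C = n - 2 * #C.negAtoms := by
  have hq : ∀ i, C.q i = 1 - 2 * if C.q i = -1 then 1 else 0 := fun i => by
    rcases C.hq i with h | h <;> simp [h]
  rw [netCharge, sum_congr rfl fun i _ => hq i, sum_sub_distrib, ← mul_sum, sum_boole]
  simp [negAtoms]

lemma q_eq_neg_of_ne {i j : Fin n} (h : C.q j ≠ C.q i) : C.q j = -C.q i := by
  rcases C.hq i with hi | hi <;> rcases C.hq j with hj | hj <;> simp_all

noncomputable def oppNbrs (r : ℝ) (i : Fin n) : Finset (Fin n) :=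
  {j | C.q j ≠ C.q i ∧ dist (C.x i) (C.x j) ≤ r}

lemma ne_of_mem_oppNbrs {r : ℝ} {i j : Fin n} (hj : j ∈ C.oppNbrs r i) : i ≠ j := by
  rintro rfl
  simp [oppNbrs] at hj

lemma mem_oppNbrs_comm {r : ℝ} {i j : Fin n} : j ∈ C.oppNbrs r i ↔ i ∈ C.oppNbrs r j := by
  simp [oppNbrs, dist_comm, eq_comm]

lemma sum_card_oppNbrs (r : ℝ) :
    ∑ i, #(C.oppNbrs r i) = 2 * ∑ i ∈ C.negAtoms, #(C.oppNbrs r i) := by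
  classical
  let R : Fin n → Fin n → Prop := fun a b => dist (C.x a) (C.x b) ≤ r
  set pos : Finset (Fin n) := {i | ¬ C.q i = -1}
  have habove : ∀ a ∈ pos, C.negAtoms.bipartiteAbove R a = C.oppNbrs r a := by
    intro a ha
    have ha1 : C.q a = 1 := (C.hq a).resolve_right (by simpa [pos] using ha)
    ext j
    rcases C.hq j with hj | hj <;> simp [bipartiteAbove, negAtoms, oppNbrs, R, ha1, hj]
  have hbelow : ∀ b ∈ C.negAtoms, pos.bipartiteBelow R b = C.oppNbrs r b := by
    intro b hb
    have hb1 : C.q b = -1 := by simpa [negAtoms] using hb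
    ext j
    rcases C.hq j with hj | hj <;> simp [bipartiteBelow, pos, oppNbrs, R, hb1, hj, dist_comm]
  rw [← sum_filter_add_sum_filter_not univ (fun i => C.q i = -1), two_mul]
  congr 1
  rw [← sum_congr rfl fun a ha => congrArg card (habove a ha),
    sum_card_bipartiteAbove_eq_sum_card_bipartiteBelow,
    sum_congr rfl fun b hb => congrArg card (hbelow b hb)]

noncomputable def closePosPairs (D : ℝ) : Finset (Fin n × Fin n) :=
  {p | p.1 ≠ p.2 ∧ C.q p.1 = 1 ∧ C.q p.2 = 1 ∧ dist (C.x p.1) (C.x p.2) ≤ D}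

def IsSeparated : Prop := ∀ i j, i ≠ j → 1 ≤ dist (C.x i) (C.x j)

section Counting

variable {C} {r : ℝ}

lemma q_eq_one_of_mem_oppNbrs {i j : Fin n} (hi : C.q i = -1) (hj : j ∈ C.oppNbrs r i) :
    C.q j = 1 := by
  have := C.q_eq_neg_of_ne (mem_filter.1 hj).2.1
  rwa [hi, neg_neg] at this

lemma dist_mem_Icc_of_mem_oppNbrs (hsep : C.IsSeparated) {i j : Fin n}
    (hj : j ∈ C.oppNbrs r i) : dist (C.x j) (C.x i) ∈ Set.Icc 1 r :=
  ⟨hsep j i (C.ne_of_mem_oppNbrs hj).symm, by rw [dist_comm]; exact (mem_filter.1 hj).2.2⟩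

variable (hr : 1 ≤ r) (hr7 : 2 * r * sin (π / 7) < 1) (hsep : C.IsSeparated)
include hr hr7 hsep

lemma card_oppNbrs_le_six (i : Fin n) : #(C.oppNbrs r i) ≤ 6 :=
  card_le_six_of_mem_annulus hr hr7 (fun _ hj => dist_mem_Icc_of_mem_oppNbrs hsep hj)
    fun a _ b _ hab => hsep a b hab

lemma two_mul_card_oppNbrs_sub_four_le {i : Fin n} (hi : i ∈ C.negAtoms) :
    2 * (#(C.oppNbrs r i) - 4) ≤ #{t ∈ C.closePosPairs (2 * r * sin (π / 5)) |
      t.1 ∈ C.oppNbrs r i ∧ t.2 ∈ C.oppNbrs r i} := by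
  have hi' : C.q i = -1 := by simpa [negAtoms] using hi
  refine (two_mul_card_sub_four_le_card_close_pairs hr hr7
    fun _ hj => dist_mem_Icc_of_mem_oppNbrs hsep hj).trans (card_le_card fun t ht => ?_)
  obtain ⟨⟨h₁, h₂⟩, hne, hd⟩ : (t.1 ∈ C.oppNbrs r i ∧ t.2 ∈ C.oppNbrs r i) ∧ t.1 ≠ t.2 ∧ _ := by
    simpa using ht
  simp only [closePosPairs, mem_filter, mem_univ, true_and]
  exact ⟨⟨hne, q_eq_one_of_mem_oppNbrs hi' h₁, q_eq_one_of_mem_oppNbrs hi' h₂, hd⟩, h₁, h₂⟩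

lemma sum_card_oppNbrs_le :
    ∑ i ∈ C.negAtoms, #(C.oppNbrs r i)
      ≤ 4 * #C.negAtoms + 3 * #(C.closePosPairs (2 * r * sin (π / 5))) := by
  classical
  set T := C.closePosPairs (2 * r * sin (π / 5))
  let R : Fin n → Fin n × Fin n → Prop := fun i t => t.1 ∈ C.oppNbrs r i ∧ t.2 ∈ C.oppNbrs r i
  -- a close pair `t` is seen only from the (at most six) opposite neighbours of `t.1`
  have hdouble : ∑ i ∈ C.negAtoms, 2 * (#(C.oppNbrs r i) - 4) ≤ 6 * #T :=
    calc ∑ i ∈ C.negAtoms, 2 * (#(C.oppNbrs r i) - 4)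
        ≤ ∑ i ∈ C.negAtoms, #(T.bipartiteAbove R i) :=
          sum_le_sum fun i hi => two_mul_card_oppNbrs_sub_four_le hr hr7 hsep hi
      _ = ∑ t ∈ T, #(C.negAtoms.bipartiteBelow R t) :=
          sum_card_bipartiteAbove_eq_sum_card_bipartiteBelow _
      _ ≤ ∑ t ∈ T, 6 := sum_le_sum fun t _ =>
          (card_le_card fun i hi => C.mem_oppNbrs_comm.1 (mem_filter.1 hi).2.1).trans
            (card_oppNbrs_le_six hr hr7 hsep t.1)
      _ = 6 * #T := by rw [sum_const, smul_eq_mul, mul_comm]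
  have hsplit : ∑ i ∈ C.negAtoms, #(C.oppNbrs r i)
      ≤ ∑ i ∈ C.negAtoms, (4 + (#(C.oppNbrs r i) - 4)) := sum_le_sum fun i _ => by omega
  rw [← mul_sum] at hdouble
  rw [sum_add_distrib, sum_const, smul_eq_mul] at hsplit
  omega

end Counting

noncomputable def repulsion (Vr : ℝ → EReal) (i j : Fin n) : EReal :=
  if i ≠ j ∧ C.q i = C.q j then Vr (dist (C.x i) (C.x j)) else 0

noncomputable def attraction (Va : ℝ → EReal) (i j : Fin n) : EReal :=
  if i ≠ j ∧ C.q i ≠ C.q j then Va (dist (C.x i) (C.x j)) else 0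

lemma energy_eq (Va Vr : ℝ → EReal) :
    energy Va Vr C = ((1 / 2 : ℝ) : EReal) * ∑ i, ∑ j, C.repulsion Vr i j
      + ((1 / 2 : ℝ) : EReal) * ∑ i, ∑ j, C.attraction Va i j :=
  rfl

lemma attraction_eq_of_mem_oppNbrs {Va : ℝ → EReal} {r : ℝ} {i j : Fin n}
    (hj : j ∈ C.oppNbrs r i) : C.attraction Va i j = Va (dist (C.x i) (C.x j)) :=
  if_pos ⟨C.ne_of_mem_oppNbrs hj, Ne.symm (mem_filter.1 hj).2.1⟩

lemma sum_sum_neg_indicator_oppNbrs (r : ℝ) :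
    ∑ i, ∑ j, ((-(if j ∈ C.oppNbrs r i then 1 else 0 : ℝ) : ℝ) : EReal)
      = ((-2 * (∑ i ∈ C.negAtoms, #(C.oppNbrs r i) : ℕ) : ℝ) : EReal) := by
  simp_rw [← EReal.coe_finset_sum, sum_neg_distrib, sum_boole, filter_mem_eq_inter, univ_inter,
    ← Nat.cast_sum, sum_card_oppNbrs, Nat.cast_mul, Nat.cast_ofNat, neg_mul]

lemma injective_x (hr₀ : r₀ < √2) (hnbhd : ∀ i, C.q i = -1 → (nbhd r₀ C i).Nonempty)
    (hrf : ∀ i j, i ≠ j → C.q i = C.q j → √2 ≤ dist (C.x i) (C.x j)) : Function.Injective C.x := by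
  intro a b hab
  by_contra hne
  have hq : C.q a ≠ C.q b := fun hq => by
    have := hrf a b hne hq
    rw [hab, dist_self] at this
    linarith [sqrt_pos.2 (two_pos : (0 : ℝ) < 2)]
  -- a neighbour of the common position would share its charge with `a` or with `b`
  have hfar : ∀ k, C.x k ≠ C.x a → r₀ < dist (C.x k) (C.x a) := by
    intro k hk
    rcases (by have := C.hq k; have := C.hq a; have := C.hq b; omega :
      C.q k = C.q a ∨ C.q k = C.q b) with hka | hkb
    · exact hr₀.trans_le (hrf k a (fun h => hk (h ▸ rfl)) hka)
    · rw [hab]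
      exact hr₀.trans_le (hrf k b (fun h => hk (h ▸ hab.symm)) hkb)
  obtain ⟨c, hc, hca⟩ : ∃ c, C.q c = -1 ∧ C.x c = C.x a := by
    rcases C.hq a with ha | ha
    · exact ⟨b, by have := C.hq b; omega, hab.symm⟩
    · exact ⟨a, ha, rfl⟩
  obtain ⟨_, ⟨k, rfl⟩, hk, hkd⟩ := hnbhd c hc
  rw [hca] at hk hkd
  exact (hfar k hk).not_ge hkd

lemma nbhd_eq_image_oppNbrs (hinj : Function.Injective C.x)
    (hfar : ∀ i j, i ≠ j → C.q i = C.q j → r₀ < dist (C.x i) (C.x j)) (i : Fin n) :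
    nbhd r₀ C i = C.x '' (C.oppNbrs r₀ i) := by
  ext y
  simp only [nbhd, oppNbrs, Set.mem_ofPred_eq, Set.mem_image, coe_filter, mem_univ, true_and]
  constructor
  · rintro ⟨⟨k, rfl⟩, hk, hkd⟩
    have hki : k ≠ i := fun h => hk (h ▸ rfl)
    refine ⟨k, ⟨fun hq => (hfar k i hki hq).not_ge hkd, by rwa [dist_comm]⟩, rfl⟩
  · rintro ⟨k, ⟨hq, hkd⟩, rfl⟩
    exact ⟨⟨k, rfl⟩, hinj.ne fun h => hq (h ▸ rfl), by rwa [dist_comm]⟩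

section Potential

variable {Va Vr : ℝ → EReal} (h : PotentialAssumptions r₀ Va Vr)
include h

lemma attraction_eq_zero_of_not_mem_oppNbrs {i j : Fin n} (hj : j ∉ C.oppNbrs r₀ i) :
    C.attraction Va i j = 0 := by
  unfold attraction
  split_ifs with hij
  · simp only [oppNbrs, mem_filter, mem_univ, true_and, not_and, not_le] at hj
    exact h.va_zero _ (hj (Ne.symm hij.2))
  · rfl

lemma attraction_ge (i j : Fin n) :
    ((-(if j ∈ C.oppNbrs r₀ i then 1 else 0 : ℝ) : ℝ) : EReal) ≤ C.attraction Va i j := by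
  by_cases hj : j ∈ C.oppNbrs r₀ i
  · rw [if_pos hj, C.attraction_eq_of_mem_oppNbrs hj]
    exact h.neg_one_le_va _
  · rw [if_neg hj, C.attraction_eq_zero_of_not_mem_oppNbrs h hj, neg_zero, EReal.coe_zero]

lemma sum_attraction_ge :
    ((-2 * (∑ i ∈ C.negAtoms, #(C.oppNbrs r₀ i) : ℕ) : ℝ) : EReal)
      ≤ ∑ i, ∑ j, C.attraction Va i j := by
  rw [← sum_sum_neg_indicator_oppNbrs]
  exact sum_le_sum fun i _ => sum_le_sum fun j _ => C.attraction_ge h i j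

lemma repulsion_ge (i j : Fin n) :
    ((if (i, j) ∈ C.closePosPairs (2 * r₀ * sin (π / 5)) then 6 else 0 : ℝ) : EReal)
      ≤ C.repulsion Vr i j := by
  unfold repulsion
  split_ifs with hp hij hij
  · exact (h.six_lt_vr (by simp [closePosPairs] at hp; exact hp.2.2.2)).le
  · simp [closePosPairs] at hp
    exact absurd ⟨hp.1, hp.2.1.trans hp.2.2.1.symm⟩ hij
  · exact_mod_cast h.zero_le_vr _
  · rfl

lemma sum_repulsion_ge :
    ((6 * #(C.closePosPairs (2 * r₀ * sin (π / 5))) : ℝ) : EReal)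
      ≤ ∑ i, ∑ j, C.repulsion Vr i j := by
  set T := C.closePosPairs (2 * r₀ * sin (π / 5))
  have hT : ∑ i, ∑ j, (if (i, j) ∈ T then (6 : ℝ) else 0) = 6 * #T := by
    rw [← Fintype.sum_prod_type' (fun i j => if (i, j) ∈ T then (6 : ℝ) else 0), sum_ite_mem,
      univ_inter, sum_const, nsmul_eq_mul, mul_comm]
  rw [← hT]
  simp_rw [EReal.coe_finset_sum]
  exact sum_le_sum fun i _ => sum_le_sum fun j _ => C.repulsion_ge h i j

lemma neg_four_mul_card_negAtoms_le_energy (hsep : C.IsSeparated) :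
    ((-4 * #C.negAtoms : ℝ) : EReal) ≤ energy Va Vr C := by
  have hcount : ((∑ i ∈ C.negAtoms, #(C.oppNbrs r₀ i) : ℕ) : ℝ)
      ≤ 4 * #C.negAtoms + 3 * #(C.closePosPairs (2 * r₀ * sin (π / 5))) := by
    exact_mod_cast sum_card_oppNbrs_le h.r₀_lb h.two_mul_mul_sin_pi_div_seven_lt_one hsep
  have hhalf : (0 : EReal) ≤ ((1 / 2 : ℝ) : EReal) := EReal.coe_nonneg.2 (by norm_num)
  calc ((-4 * #C.negAtoms : ℝ) : EReal)
      ≤ ((1 / 2 : ℝ) : EReal) * ((6 * #(C.closePosPairs (2 * r₀ * sin (π / 5))) : ℝ) : EReal)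
        + ((1 / 2 : ℝ) : EReal)
          * ((-2 * (∑ i ∈ C.negAtoms, #(C.oppNbrs r₀ i) : ℕ) : ℝ) : EReal) := by
        rw [← EReal.coe_mul, ← EReal.coe_mul, ← EReal.coe_add, EReal.coe_le_coe_iff]
        linarith
    _ ≤ energy Va Vr C := by
        rw [energy_eq]
        exact add_le_add (mul_le_mul_of_nonneg_left (C.sum_repulsion_ge h) hhalf)
          (mul_le_mul_of_nonneg_left (C.sum_attraction_ge h) hhalf)

lemma energy_eq_top_of_dist_lt_one {i j : Fin n} (hij : i ≠ j) (hd : dist (C.x i) (C.x j) < 1) :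
    energy Va Vr C = ⊤ := by
  have hrep : ∀ a b, C.repulsion Vr a b ≠ ⊥ := fun a b =>
    ne_bot_of_le_ne_bot (EReal.coe_ne_bot _) (C.repulsion_ge h a b)
  have hatt : ∀ a b, C.attraction Va a b ≠ ⊥ := fun a b =>
    ne_bot_of_le_ne_bot (EReal.coe_ne_bot _) (C.attraction_ge h a b)
  rw [energy_eq]
  refine EReal.coe_mul_add_coe_mul_eq_top (by norm_num) (EReal.sum_sum_ne_bot hrep)
    (EReal.sum_sum_ne_bot hatt) ?_
  by_cases hq : C.q i = C.q j
  · exact .inl <| EReal.sum_sum_eq_top_of_ne_bot hrep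
      (by rw [repulsion, if_pos ⟨hij, hq⟩, h.vr_inf _ hd])
  · exact .inr <| EReal.sum_sum_eq_top_of_ne_bot hatt
      (by rw [attraction, if_pos ⟨hij, hq⟩, h.va_inf _ hd])

lemma attraction_eq_of_dist_eq_one
    (hunit : ∀ i j, C.q i ≠ C.q j → dist (C.x i) (C.x j) ≤ r₀ → dist (C.x i) (C.x j) = 1)
    (i j : Fin n) :
    C.attraction Va i j = ((-(if j ∈ C.oppNbrs r₀ i then 1 else 0 : ℝ) : ℝ) : EReal) := by
  by_cases hj : j ∈ C.oppNbrs r₀ i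
  · obtain ⟨hq, hd⟩ : C.q j ≠ C.q i ∧ dist (C.x i) (C.x j) ≤ r₀ := by simpa [oppNbrs] using hj
    rw [if_pos hj, C.attraction_eq_of_mem_oppNbrs hj, hunit i j (Ne.symm hq) hd, h.va_one]
  · rw [if_neg hj, C.attraction_eq_zero_of_not_mem_oppNbrs h hj, neg_zero, EReal.coe_zero]

lemma energy_eq_neg_four_mul_card_negAtoms (h4 : ∀ i, C.q i = -1 → (nbhd r₀ C i).ncard = 4)
    (hunit : ∀ i j, (bondGraph r₀ C).Adj i j → dist (C.x i) (C.x j) = 1)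
    (hrf : ∀ i j, i ≠ j → C.q i = C.q j → √2 ≤ dist (C.x i) (C.x j)) :
    energy Va Vr C = ((-4 * #C.negAtoms : ℝ) : EReal) := by
  have hinj := C.injective_x h.r₀_lt_sqrt_two
    (fun i hi => Set.nonempty_of_ncard_ne_zero (by rw [h4 i hi]; norm_num)) hrf
  have hfar : ∀ i j, i ≠ j → C.q i = C.q j → r₀ < dist (C.x i) (C.x j) := fun i j hij hq =>
    h.r₀_lt_sqrt_two.trans_le (hrf i j hij hq)
  have hrep : ∀ i j, C.repulsion Vr i j = 0 := by
    intro i j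
    unfold repulsion
    split_ifs with hij
    · exact (h.vr_zero_iff _).2 (hrf i j hij.1 hij.2)
    · rfl
  have hatt := C.attraction_eq_of_dist_eq_one h fun i j hq hd =>
    hunit i j ⟨hinj.ne fun hij => hq (hij ▸ rfl), hd⟩
  have hcard : ∑ i ∈ C.negAtoms, #(C.oppNbrs r₀ i) = 4 * #C.negAtoms := by
    rw [sum_congr rfl fun i hi => ?_, sum_const, smul_eq_mul, mul_comm]
    rw [← h4 i (by simpa [negAtoms] using hi), C.nbhd_eq_image_oppNbrs hinj hfar,
      Set.ncard_image_of_injective _ hinj, Set.ncard_coe_finset]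
  rw [energy_eq]
  simp only [hrep, hatt, sum_const_zero, mul_zero, zero_add, sum_sum_neg_indicator_oppNbrs, hcard]
  rw [← EReal.coe_mul, EReal.coe_eq_coe_iff]
  push_cast
  ring

end Potential

end Config

theorem net_charge_controls_energy_general (r₀ : ℝ) (Va Vr : ℝ → EReal)
    (h : PotentialAssumptions r₀ Va Vr) (n : ℕ) (C : Config n) :
    ((((-2) * (n : ℝ) + 2 * (netCharge C : ℝ) : ℝ)) : EReal) ≤ energy Va Vr C ∧
    (((∀ i : Fin n, C.q i = -1 → (nbhd r₀ C i).ncard = 4) ∧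
      (∀ i j : Fin n, (bondGraph r₀ C).Adj i j → dist (C.x i) (C.x j) = 1) ∧
      (∀ i j : Fin n, i ≠ j → C.q i = C.q j →
        Real.sqrt 2 ≤ dist (C.x i) (C.x j))) →
      energy Va Vr C = ((((-2) * (n : ℝ) + 2 * (netCharge C : ℝ) : ℝ)) : EReal)) := by
  have hcharge : (-2) * (n : ℝ) + 2 * (netCharge C : ℝ) = -4 * #C.negAtoms := by
    rw [C.netCharge_eq]; push_cast; ring
  rw [hcharge]
  refine ⟨?_, fun ⟨h4, hunit, hrf⟩ => C.energy_eq_neg_four_mul_card_negAtoms h h4 hunit hrf⟩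
  by_cases hsep : C.IsSeparated
  · exact C.neg_four_mul_card_negAtoms_le_energy h hsep
  · obtain ⟨i, j, hij, hd⟩ : ∃ i j, i ≠ j ∧ dist (C.x i) (C.x j) < 1 := by
      simpa [Config.IsSeparated] using hsep
    rw [C.energy_eq_top_of_dist_lt_one h hij hd]
    exact le_top

/-- For configurations with nonnegative net charge, `E(C) ≥ -2n + 2Q(C)`;
conversely if all atoms of charge `-1` are 4-bonded, all bonds have unit length and the
configuration is repulsion-free, then equality holds. -/
theorem net_charge_controls_energy (r₀ : ℝ) (Va Vr : ℝ → EReal)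
    (h : PotentialAssumptions r₀ Va Vr) (n : ℕ) (C : Config n)
    (hQ : 0 ≤ netCharge C) :
    ((((-2) * (n : ℝ) + 2 * (netCharge C : ℝ) : ℝ)) : EReal) ≤ energy Va Vr C ∧
    (((∀ i : Fin n, C.q i = -1 → (nbhd r₀ C i).ncard = 4) ∧
      (∀ i j : Fin n, (bondGraph r₀ C).Adj i j → dist (C.x i) (C.x j) = 1) ∧
      (∀ i j : Fin n, i ≠ j → C.q i = C.q j →
        Real.sqrt 2 ≤ dist (C.x i) (C.x j))) →
      energy Va Vr C = ((((-2) * (n : ℝ) + 2 * (netCharge C : ℝ) : ℝ)) : EReal)) :=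
  net_charge_controls_energy_general r₀ Va Vr h n C
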